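/- arXiv:math/0603556 — 2 statements merged into one kernel-verified Lean document; each statement's English description precedes it below -/
import Mathlib

section
/- Let A be an m×n real matrix of rank n and b ∈ ℝᵐ such that the polyhedron P = {x ∈ ℝⁿ : Ax + b ≥ 0} is bounded. Then the intersection of the nonnegative cone ℝᵐ_{≥0} with the linear subspace A(ℝⁿ) (the image of A) consists only of the origin. -/
/-- If `A` is an `m × n` real matrix of rank `n` and the (nonempty) polytope
`P = {x : Ax + b ≥ 0}` is bounded, then the nonnegative cone `ℝᵐ_{≥0}` meets the
image of `A` only in the origin: if `y = Ax ≥ 0` coordinatewise then `y = 0`. -/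
theorem image_meets_positive_cone_trivially {m n : ℕ}
    (A : Matrix (Fin m) (Fin n) ℝ) (b : Fin m → ℝ)
    (hrank : A.rank = n)
    (P : Set (Fin n → ℝ)) (hP : P = {x | ∀ i, A.mulVec x i + b i ≥ 0})
    (hne : P.Nonempty) (hbdd : Bornology.IsBounded P) :
    ∀ x : Fin n → ℝ, (∀ i, A.mulVec x i ≥ 0) → A.mulVec x = 0 := by
  intro x hx
  obtain ⟨x0, hx0⟩ := hne
  have hmem : ∀ t : ℝ, 0 ≤ t → x0 + t • x ∈ P := by
    intro t ht
    rw [hP] at hx0 ⊢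
    intro i
    have heq : A.mulVec (x0 + t • x) i = A.mulVec x0 i + t * A.mulVec x i := by
      simp [Matrix.mulVec_add, Matrix.mulVec_smul, smul_eq_mul]
    rw [heq]
    nlinarith [hx0 i, hx i]
  obtain ⟨C, hC⟩ := isBounded_iff_forall_norm_le.1 hbdd
  have hx0norm := hC x0 hx0
  have hxz : x = 0 := by
    by_contra hne0
    have hnorm : (0:ℝ) < ‖x‖ := norm_pos_iff.mpr hne0
    set t := (C + ‖x0‖ + 1) / ‖x‖ with htdef
    have hx0n : (0:ℝ) ≤ ‖x0‖ := norm_nonneg _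
    have hCpos : 0 ≤ C := le_trans hx0n hx0norm
    have ht : 0 ≤ t := by positivity
    have hb := hC _ (hmem t ht)
    have h1 : ‖t • x‖ ≤ ‖x0 + t • x‖ + ‖x0‖ := by
      calc ‖t • x‖ = ‖(x0 + t • x) - x0‖ := by rw [add_sub_cancel_left]
        _ ≤ ‖x0 + t • x‖ + ‖x0‖ := norm_sub_le _ _
    have h2 : ‖t • x‖ = t * ‖x‖ := by
      rw [norm_smul, Real.norm_of_nonneg ht]
    have h3 : t * ‖x‖ = C + ‖x0‖ + 1 := by
      rw [htdef, div_mul_cancel₀ _ hnorm.ne']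
    rw [h2, h3] at h1
    linarith
  rw [hxz, Matrix.mulVec_zero]
end

section
/- Let A be an m×n real matrix of rank n such that P = {x : Ax + b ≥ 0} is a bounded polytope, and let C be an (m−n)×m matrix with ker C = im A. Then the only solution z ∈ ℂᵐ of the homogeneous system ∑_{k=1}^m c_{jk}|z_k|² = 0 (j = 1,…,m−n) is z = 0. -/
/-- If `A` has rank `n`, the (nonempty) polytope `P = {x : Ax + b ≥ 0}` is bounded,
and `ker C = im A`, then the only solution `z ∈ ℂᵐ` of the homogeneous system
`∑ₖ c_{jk}|z_k|² = 0` (`j = 1,…,m−n`) is `z = 0`. -/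
theorem homogeneous_quadrics_only_zero {m n : ℕ}
    (A : Matrix (Fin m) (Fin n) ℝ) (C : Matrix (Fin (m - n)) (Fin m) ℝ)
    (b : Fin m → ℝ) (hrank : A.rank = n)
    (P : Set (Fin n → ℝ)) (hP : P = {x | ∀ i, A.mulVec x i + b i ≥ 0})
    (hne : P.Nonempty) (hbdd : Bornology.IsBounded P)
    (hexact : ∀ y : Fin m → ℝ, C.mulVec y = 0 ↔ ∃ x, A.mulVec x = y) :
    ∀ z : Fin m → ℂ, (∀ j, ∑ k, C j k * ‖z k‖ ^ 2 = 0) → z = 0 := by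
  subst hP
  intro z hz
  set y : Fin m → ℝ := fun k => ‖z k‖ ^ 2 with hy
  have hCy : C.mulVec y = 0 := by
    funext j
    simpa [Matrix.mulVec, dotProduct, hy] using hz j
  obtain ⟨x, hx⟩ := (hexact y).mp hCy
  have hy0 : ∀ k, 0 ≤ y k := fun k => by positivity
  obtain ⟨p, hp⟩ := hne
  obtain ⟨R, hR⟩ := hbdd.exists_norm_le
  have hx0 : x = 0 := by
    by_contra h
    have hxn : 0 < ‖x‖ := norm_pos_iff.mpr h
    set t : ℝ := (R + ‖p‖ + 1) / ‖x‖ with ht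
    have ht0 : 0 ≤ t := by
      apply div_nonneg _ hxn.le
      have := norm_nonneg p
      have hRp : 0 ≤ R := le_trans (norm_nonneg p) (hR p hp)
      linarith
    have hmem : (p + t • x) ∈ {x | ∀ i, A.mulVec x i + b i ≥ 0} := by
      intro i
      have : A.mulVec (p + t • x) i = A.mulVec p i + t * A.mulVec x i := by
        rw [Matrix.mulVec_add, Matrix.mulVec_smul]
        simp [smul_eq_mul]
      rw [this, hx]
      have h1 : A.mulVec p i + b i ≥ 0 := hp i
      have h2 : 0 ≤ t * y i := mul_nonneg ht0 (hy0 i)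
      linarith
    have hle := hR _ hmem
    have h1 : ‖t • x‖ - ‖p‖ ≤ ‖p + t • x‖ := by
      have := norm_add_le (-p) (p + t • x)
      simp at this
      calc ‖t • x‖ - ‖p‖ ≤ ‖p + t • x‖ + ‖p‖ - ‖p‖ := by
            have : ‖t • x‖ = ‖p + t • x - p‖ := by ring_nf
            rw [this]
            have := norm_sub_le (p + t • x) p
            linarith [norm_sub_le (p + t • x) p]
          _ = ‖p + t • x‖ := by ring
    have h2 : ‖t • x‖ = t * ‖x‖ := by
      rw [norm_smul, Real.norm_eq_abs, abs_of_nonneg ht0]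
    have h3 : t * ‖x‖ = R + ‖p‖ + 1 := by
      rw [ht, div_mul_cancel₀ _ hxn.ne']
    have : R + 1 ≤ R := by
      have := h1
      rw [h2, h3] at this
      linarith [hR _ hmem]
    linarith
  have hy00 : y = 0 := by rw [← hx, hx0, Matrix.mulVec_zero]
  funext k
  have : ‖z k‖ ^ 2 = 0 := congrFun hy00 k
  have : ‖z k‖ = 0 := by nlinarith [norm_nonneg (z k)]
  simpa using this
end
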